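/- Let σ be the uniform (rotation-invariant) probability measure on the unit sphere S² of ℝ³. Then for every C ∈ [0,1], g(C,σ) = ∫₀¹ √(C² + (1−C²)x²) dx, which for 0 < C < 1 equals 1/2 + C²·arcsinh(√(1−C²)/C)/(2√(1−C²)); in particular g(0,σ) = 1/2. Moreover, σ is optimal: every Borel probability measure μ on S² satisfies g(C,μ) ≥ g(C,σ) for all C ∈ [0,1]. -/

import Mathlib

/-!
Archimedes' hat-box theorem: for the surface measure `τ` of `S²` and a unit vector `u`, the map
`v ↦ ⟪u, v⟫` pushes `τ` forward to `2π` times Lebesgue measure on `[-1, 1]`. Writing `τ` as the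
angular part of Lebesgue measure on the unit ball, rotating `u` to the first basis vector and
passing to cylindrical coordinates, and then to polar coordinates in the meridian half-plane,
reduces this to `∫₀^π sin θ f (cos θ) dθ = ∫₋₁¹ f`.

Averaging `∫ h ⟪r, v⟫ dμ(r)` over `v ∈ S²` and swapping the integrals, its mean value is
`½ ∫₋₁¹ h = ∫₀¹ h` for every probability measure `μ` on `S²` (`h` is even). The supremum
`g(C, μ)` is at least this mean, and for a rotation-invariant `σ` the integral does not depend
on `v`, so `g(C, σ)` equals it.
-/

open MeasureTheory Real
open scoped ENNReal

noncomputable section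

abbrev E3 := EuclideanSpace ℝ (Fin 3)

/-- The unit sphere S² in ℝ³. -/
def unitSphere : Set E3 := Metric.sphere (0 : E3) 1

/-- `g C μ` is the supremum over unit vectors `v` of `∫ √(C² + (1−C²)⟨r,v⟩²) dμ(r)`. -/
def g (C : ℝ) (μ : Measure E3) : ℝ :=
  ⨆ v : unitSphere, ∫ r, Real.sqrt (C ^ 2 + (1 - C ^ 2) * (inner ℝ r (v : E3) : ℝ) ^ 2) ∂μ

open Set Metric
open scoped RealInnerProductSpace

section Polar

variable {E : Type*} [NormedAddCommGroup E] [NormedSpace ℝ E] [FiniteDimensional ℝ E]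
  [MeasurableSpace E] [BorelSpace E] [Nontrivial E] (μ : Measure E) [μ.IsAddHaarMeasure]

theorem integral_comp_smul_inv_norm_mul (F : E → ℝ) (ψ : ℝ → ℝ) :
    ∫ x, F (‖x‖⁻¹ • x) * ψ ‖x‖ ∂μ =
      (∫ v : sphere (0 : E) 1, F v ∂μ.toSphere) *
        ∫ r in Ioi (0 : ℝ), r ^ (Module.finrank ℝ E - 1) * ψ r := by
  calc ∫ x, F (‖x‖⁻¹ • x) * ψ ‖x‖ ∂μ
      = ∫ x : ({0}ᶜ : Set E), F (‖x.1‖⁻¹ • x.1) * ψ ‖x.1‖ ∂(μ.comap (↑)) := by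
        rw [integral_subtype_comap (measurableSet_singleton _).compl
          fun x ↦ F (‖x‖⁻¹ • x) * ψ ‖x‖, restrict_compl_singleton]
    _ = ∫ p, F p.1 * ψ p.2 ∂μ.toSphere.prod (.volumeIoiPow (Module.finrank ℝ E - 1)) := by
        simpa using μ.measurePreserving_homeomorphUnitSphereProd.integral_comp
          (Homeomorph.measurableEmbedding _) (fun p ↦ F p.1 * ψ p.2)
    _ = _ := by
        rw [integral_prod_mul (fun v : sphere (0 : E) 1 ↦ F v) (fun r : Ioi (0 : ℝ) ↦ ψ r)]
        congr 1
        simp only [Measure.volumeIoiPow, ENNReal.ofReal]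
        rw [integral_withDensity_eq_integral_smul,
          integral_subtype_comap measurableSet_Ioi
            fun a ↦ Real.toNNReal (a ^ (Module.finrank ℝ E - 1)) • ψ a,
          setIntegral_congr_fun measurableSet_Ioi fun x hx ↦ ?_]
        · rw [NNReal.smul_def, Real.coe_toNNReal _ (pow_nonneg (le_of_lt hx) _), smul_eq_mul]
        · exact (measurable_subtype_coe.pow_const _).real_toNNReal

end Polar

section Rotation

variable {E : Type*} [NormedAddCommGroup E] [InnerProductSpace ℝ E] [MeasurableSpace E]
  [BorelSpace E]

theorem integral_comp_inner_norm_eq_of_norm_eq [FiniteDimensional ℝ E] (Φ : ℝ → ℝ → ℝ)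
    {u v : E} (h : ‖u‖ = ‖v‖) : ∫ x, Φ ⟪u, x⟫ ‖x‖ = ∫ x, Φ ⟪v, x⟫ ‖x‖ := by
  set O := (ℝ ∙ (u - v))ᗮ.reflection
  have hO : O u = v := Submodule.reflection_sub h
  symm
  rw [← O.measurePreserving.integral_comp O.toHomeomorph.measurableEmbedding]
  simp only [← hO, LinearIsometryEquiv.inner_map_map, LinearIsometryEquiv.norm_map]

theorem integral_comp_inner_eq_of_map_eq (σ : Measure E)
    (hinv : ∀ O : E ≃ₗᵢ[ℝ] E, σ.map O = σ) (F : ℝ → ℝ) {u v : E} (h : ‖u‖ = ‖v‖) :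
    ∫ r, F ⟪r, u⟫ ∂σ = ∫ r, F ⟪r, v⟫ ∂σ := by
  set O := (ℝ ∙ (u - v))ᗮ.reflection
  have hO : O u = v := Submodule.reflection_sub h
  have hO_mp : MeasurePreserving O σ σ := ⟨O.continuous.measurable, hinv O⟩
  conv_rhs => rw [← hO_mp.integral_comp O.toHomeomorph.measurableEmbedding]
  simp only [← hO, LinearIsometryEquiv.inner_map_map]

end Rotation

theorem integral_Ioo_eq_intervalIntegral (f : ℝ → ℝ) {a b : ℝ} (hab : a ≤ b) :
    ∫ x in Ioo a b, f x = ∫ x in a..b, f x := by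
  rw [intervalIntegral.integral_of_le hab, integral_Ioc_eq_integral_Ioo]

theorem integral_sin_mul_comp_cos (f : ℝ → ℝ) (hf : Continuous f) :
    ∫ θ in (0 : ℝ)..π, sin θ * f (cos θ) = ∫ t in (-1 : ℝ)..1, f t := by
  have h := intervalIntegral.integral_comp_mul_deriv (a := 0) (b := π)
    (fun θ _ ↦ hasDerivAt_cos θ) (by fun_prop) hf
  simp only [Function.comp_apply, cos_zero, cos_pi, mul_neg, intervalIntegral.integral_neg] at h
  rw [intervalIntegral.integral_symm (-1 : ℝ) 1, neg_inj] at h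
  simpa only [mul_comm] using h

theorem integral_comp_sq_add_sq (H : ℝ → ℝ) :
    ∫ w : ℝ × ℝ, H (w.1 ^ 2 + w.2 ^ 2) = 2 * π * ∫ a in Ioi (0 : ℝ), a * H (a ^ 2) := by
  rw [← integral_comp_polarCoord_symm]
  have hpolar : ∀ p : ℝ × ℝ, p.1 • H ((polarCoord.symm p).1 ^ 2 + (polarCoord.symm p).2 ^ 2)
      = p.1 * H (p.1 ^ 2) * 1 := fun p ↦ by
    simp only [polarCoord_symm_apply, smul_eq_mul, mul_one]
    congr 2
    linear_combination p.1 ^ 2 * sin_sq_add_cos_sq p.2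
  simp only [hpolar, polarCoord_target, Measure.volume_eq_prod]
  rw [setIntegral_prod_mul (fun ρ ↦ ρ * H (ρ ^ 2)) (fun _ ↦ (1 : ℝ))]
  simp only [integral_const, measureReal_restrict_apply_univ, Real.volume_real_Ioo, smul_eq_mul,
    sub_neg_eq_add, ← two_mul, max_eq_left (by positivity : (0 : ℝ) ≤ 2 * π)]
  ring

theorem integrable_of_bounded_of_support_subset {α : Type*} [MeasurableSpace α] {μ : Measure α}
    {F : α → ℝ} {s : Set α} (hs : μ s ≠ ⊤) (hF : AEStronglyMeasurable F μ) {M : ℝ}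
    (hM : ∀ x, |F x| ≤ M) (hsupp : Function.support F ⊆ s) : Integrable F μ :=
  (integrableOn_iff_integrable_of_support_subset hsupp).1
    (Measure.integrableOn_of_bounded hs hF (ae_of_all _ hM))

theorem Continuous.exists_abs_le_on_Icc {f : ℝ → ℝ} (hf : Continuous f) :
    ∃ M, ∀ t ∈ Icc (-1 : ℝ) 1, |f t| ≤ M :=
  isCompact_Icc.exists_bound_of_continuousOn hf.continuousOn

theorem mem_Icc_of_sq_add_lt_one {x y : ℝ} (hy : 0 ≤ y) (h : x ^ 2 + y < 1) :
    x ∈ Icc (-1 : ℝ) 1 :=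
  ⟨by nlinarith, by nlinarith⟩

/-- `x ↦ f (x₀ / ‖x‖)` on the unit ball of `ℝ³` (and `0` outside it), in the cylindrical
variables `z = x₀` and `s = x₁² + x₂²`. -/
def zonalProfile (f : ℝ → ℝ) (z s : ℝ) : ℝ :=
  if z ^ 2 + s < 1 then f (z / √(z ^ 2 + s)) else 0

theorem Measurable.zonalProfile {α : Type*} [MeasurableSpace α] {f : ℝ → ℝ} (hf : Measurable f)
    {z s : α → ℝ} (hz : Measurable z) (hs : Measurable s) :
    Measurable fun a ↦ zonalProfile f (z a) (s a) :=
  Measurable.ite (measurableSet_lt (by fun_prop) measurable_const) (hf.comp (by fun_prop))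
    measurable_const

theorem lt_one_of_zonalProfile_ne_zero {f : ℝ → ℝ} {z s : ℝ} (h : zonalProfile f z s ≠ 0) :
    z ^ 2 + s < 1 := by
  by_contra hzs
  exact h (if_neg hzs)

theorem abs_zonalProfile_le {f : ℝ → ℝ} {M : ℝ} (hM : ∀ t ∈ Icc (-1 : ℝ) 1, |f t| ≤ M)
    (z : ℝ) {s : ℝ} (hs : 0 ≤ s) : |zonalProfile f z s| ≤ M := by
  unfold zonalProfile
  split_ifs
  · refine hM _ (abs_le.1 ?_)
    rw [abs_div, abs_of_nonneg (sqrt_nonneg _)]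
    exact div_le_one_of_le₀ (abs_le_sqrt (by linarith)) (sqrt_nonneg _)
  · simpa using (abs_nonneg _).trans (hM 0 (by norm_num))

theorem integrable_zonalProfile {f : ℝ → ℝ} (hf : Continuous f) :
    Integrable fun q : ℝ × ℝ × ℝ ↦ zonalProfile f q.1 (q.2.1 ^ 2 + q.2.2 ^ 2) := by
  obtain ⟨M, hM⟩ := hf.exists_abs_le_on_Icc
  refine integrable_of_bounded_of_support_subset (s := Icc (-1) 1 ×ˢ Icc (-1) 1 ×ˢ Icc (-1) 1)
    (isCompact_Icc.prod (isCompact_Icc.prod isCompact_Icc)).measure_lt_top.ne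
    (hf.measurable.zonalProfile (by fun_prop) (by fun_prop)).aestronglyMeasurable
    (fun q ↦ abs_zonalProfile_le hM _ (by positivity)) fun q hq ↦ ?_
  have h := lt_one_of_zonalProfile_ne_zero hq
  exact ⟨mem_Icc_of_sq_add_lt_one (by positivity) h,
    mem_Icc_of_sq_add_lt_one (y := q.1 ^ 2 + q.2.2 ^ 2) (by positivity) (by linarith),
    mem_Icc_of_sq_add_lt_one (y := q.1 ^ 2 + q.2.1 ^ 2) (by positivity) (by linarith)⟩

theorem integrable_meridian {f : ℝ → ℝ} (hf : Continuous f) :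
    Integrable fun p : ℝ × ℝ ↦ if 0 < p.2 then p.2 * zonalProfile f p.1 (p.2 ^ 2) else 0 := by
  set m : ℝ × ℝ → ℝ := fun p ↦ if 0 < p.2 then p.2 * zonalProfile f p.1 (p.2 ^ 2) else 0
  obtain ⟨M, hM⟩ := hf.exists_abs_le_on_Icc
  have hsupp : ∀ {p}, m p ≠ 0 → 0 < p.2 ∧ p.1 ^ 2 + p.2 ^ 2 < 1 := fun {p} hp ↦ by
    by_cases h2 : 0 < p.2
    · simp only [m, if_pos h2, mul_ne_zero_iff] at hp
      exact ⟨h2, lt_one_of_zonalProfile_ne_zero hp.2⟩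
    · simp [m, h2] at hp
  refine integrable_of_bounded_of_support_subset (s := Icc (-1) 1 ×ˢ Icc (-1) 1)
    (isCompact_Icc.prod isCompact_Icc).measure_lt_top.ne ?_ (M := M) (fun p ↦ ?_) fun p hp ↦ ?_
  · exact (Measurable.ite (measurableSet_lt measurable_const measurable_snd)
      (measurable_snd.mul (hf.measurable.zonalProfile (by fun_prop) (by fun_prop)))
      measurable_const).aestronglyMeasurable
  · by_cases hp : m p = 0
    · simpa [hp] using (abs_nonneg _).trans (hM 0 (by norm_num))
    obtain ⟨h2, h12⟩ := hsupp hp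
    have hz := abs_zonalProfile_le hM p.1 (sq_nonneg p.2)
    have ha := mem_Icc_of_sq_add_lt_one (x := p.2) (y := p.1 ^ 2) (by positivity) (by linarith)
    simp only [m, if_pos h2, abs_mul]
    nlinarith [abs_le.2 ha, abs_nonneg (zonalProfile f p.1 (p.2 ^ 2))]
  · obtain ⟨h2, h12⟩ := hsupp hp
    exact ⟨mem_Icc_of_sq_add_lt_one (by positivity) h12,
      mem_Icc_of_sq_add_lt_one (x := p.2) (y := p.1 ^ 2) (by positivity) (by linarith)⟩

theorem zonalProfile_polar (f : ℝ → ℝ) {ρ θ : ℝ} (hρ : 0 < ρ) (hθ : θ ∈ Ioo (-π) π) :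
    ρ * (if 0 < ρ * sin θ then ρ * sin θ * zonalProfile f (ρ * cos θ) ((ρ * sin θ) ^ 2) else 0)
      = (Iio 1).indicator (· ^ 2) ρ * (Ioo 0 π).indicator (fun θ ↦ sin θ * f (cos θ)) θ := by
  have hnorm : (ρ * cos θ) ^ 2 + (ρ * sin θ) ^ 2 = ρ ^ 2 := by
    linear_combination ρ ^ 2 * cos_sq_add_sin_sq θ
  have hsin : 0 < ρ * sin θ ↔ θ ∈ Ioo 0 π := by
    rw [mul_pos_iff_of_pos_left hρ]
    refine ⟨fun h ↦ ⟨?_, hθ.2⟩, fun h ↦ sin_pos_of_pos_of_lt_pi h.1 h.2⟩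
    by_contra! h'
    linarith [sin_nonpos_of_nonpos_of_neg_pi_le h' hθ.1.le]
  simp only [zonalProfile, hnorm, sq_lt_one_iff₀ hρ.le, sqrt_sq hρ.le,
    mul_div_cancel_left₀ _ hρ.ne', indicator, mem_Iio, hsin]
  split_ifs <;> ring

theorem integral_meridian (f : ℝ → ℝ) (hf : Continuous f) :
    ∫ p : ℝ × ℝ, (if 0 < p.2 then p.2 * zonalProfile f p.1 (p.2 ^ 2) else 0)
      = (∫ t in (-1 : ℝ)..1, f t) / 3 := by
  rw [← integral_comp_polarCoord_symm]
  simp only [polarCoord_target, Measure.volume_eq_prod, polarCoord_symm_apply, smul_eq_mul]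
  rw [setIntegral_congr_fun (measurableSet_Ioi.prod measurableSet_Ioo)
      fun p hp ↦ zonalProfile_polar f hp.1 hp.2,
    setIntegral_prod_mul, setIntegral_indicator measurableSet_Iio,
    setIntegral_indicator measurableSet_Ioo, Ioi_inter_Iio,
    inter_eq_right.2 (Ioo_subset_Ioo_left (by linarith [pi_pos])),
    integral_Ioo_eq_intervalIntegral _ zero_le_one, integral_Ioo_eq_intervalIntegral _ pi_pos.le,
    integral_pow, integral_sin_mul_comp_cos f hf]
  ring

theorem integral_zonalProfile (f : ℝ → ℝ) (hf : Continuous f) :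
    ∫ q : ℝ × ℝ × ℝ, zonalProfile f q.1 (q.2.1 ^ 2 + q.2.2 ^ 2)
      = 2 * π * ((∫ t in (-1 : ℝ)..1, f t) / 3) := by
  rw [Measure.volume_eq_prod, integral_prod _ (integrable_zonalProfile hf)]
  simp only [integral_comp_sq_add_sq (zonalProfile f _), integral_const_mul]
  rw [← integral_meridian f hf, Measure.volume_eq_prod, integral_prod _ (integrable_meridian hf)]
  congr 2 with z
  rw [← integral_indicator measurableSet_Ioi]
  rfl

def coordEquiv : E3 ≃ᵐ ℝ × ℝ × ℝ :=
  (MeasurableEquiv.toLp 2 (Fin 3 → ℝ)).symm.trans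
    ((MeasurableEquiv.piFinSuccAbove (fun _ : Fin 3 ↦ ℝ) 0).trans
      ((MeasurableEquiv.refl ℝ).prodCongr MeasurableEquiv.finTwoArrow))

theorem coordEquiv_apply (x : E3) : coordEquiv x = (x 0, x 1, x 2) := rfl

theorem measurePreserving_coordEquiv : MeasurePreserving coordEquiv :=
  ((MeasurePreserving.id volume).prod (volume_preserving_finTwoArrow ℝ)).comp
    ((volume_preserving_piFinSuccAbove (fun _ : Fin 3 ↦ ℝ) 0).comp
      (EuclideanSpace.volume_preserving_symm_measurableEquiv_toLp (Fin 3)))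

theorem norm_sq_E3 (x : E3) : ‖x‖ ^ 2 = x 0 ^ 2 + (x 1 ^ 2 + x 2 ^ 2) := by
  rw [EuclideanSpace.norm_sq_eq, Fin.sum_univ_three]
  simp only [Real.norm_eq_abs, sq_abs]
  ring

theorem zonalProfile_coord (f : ℝ → ℝ) (x : E3) :
    f (‖x‖⁻¹ * ⟪EuclideanSpace.single 0 1, x⟫) * (Iio 1).indicator 1 ‖x‖
      = zonalProfile f (x 0) (x 1 ^ 2 + x 2 ^ 2) := by
  simp only [zonalProfile, ← norm_sq_E3, sqrt_sq (norm_nonneg x), sq_lt_one_iff₀ (norm_nonneg x),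
    EuclideanSpace.inner_single_left, indicator, mem_Iio, Pi.one_apply]
  split_ifs <;> simp [div_eq_inv_mul]

theorem integral_toSphere_comp_inner (f : ℝ → ℝ) (hf : Continuous f) {u : E3} (hu : ‖u‖ = 1) :
    ∫ v : sphere (0 : E3) 1, f ⟪u, v⟫ ∂(volume : Measure E3).toSphere
      = 2 * π * ∫ t in (-1 : ℝ)..1, f t := by
  have hpolar := integral_comp_smul_inv_norm_mul (volume : Measure E3) (fun y ↦ f ⟪u, y⟫)
    ((Iio 1).indicator 1)
  have hradial : ∫ r in Ioi (0 : ℝ), r ^ (Module.finrank ℝ E3 - 1) * (Iio 1).indicator 1 r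
      = 1 / 3 := by
    simp only [finrank_euclideanSpace_fin, ← indicator_mul_right _ (fun r : ℝ ↦ r ^ (3 - 1))]
    rw [setIntegral_indicator measurableSet_Iio, Ioi_inter_Iio,
      integral_Ioo_eq_intervalIntegral _ zero_le_one]
    norm_num
  have hball : ∫ x : E3, f (‖x‖⁻¹ * ⟪u, x⟫) * (Iio 1).indicator 1 ‖x‖
      = 2 * π * ((∫ t in (-1 : ℝ)..1, f t) / 3) := by
    rw [integral_comp_inner_norm_eq_of_norm_eq (fun s ρ ↦ f (ρ⁻¹ * s) * (Iio 1).indicator 1 ρ)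
      (v := EuclideanSpace.single 0 1) (hu.trans (by simp)), ← integral_zonalProfile f hf,
      ← measurePreserving_coordEquiv.integral_comp coordEquiv.measurableEmbedding]
    simp only [zonalProfile_coord, coordEquiv_apply]
  simp only [real_inner_smul_right, hball, hradial] at hpolar
  linarith

theorem measureReal_toSphere_univ : (volume : Measure E3).toSphere.real univ = 4 * π := by
  have h := integral_toSphere_comp_inner (fun _ ↦ 1) continuous_const
    (u := EuclideanSpace.single 0 1) (by simp)
  simp only [integral_const, smul_eq_mul, mul_one, intervalIntegral.integral_const] at h
  linarith

theorem ae_norm_eq_one {μ : Measure E3} (hμ : μ unitSphereᶜ = 0) : ∀ᵐ r ∂μ, ‖r‖ = 1 :=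
  (measure_eq_zero_iff_ae_notMem.1 hμ).mono fun r hr ↦ by simpa [unitSphere] using hr

theorem integrable_prod_comp_inner {f : ℝ → ℝ} (hf : Continuous f)
    (ν : Measure (sphere (0 : E3) 1)) [IsFiniteMeasure ν]
    {μ : Measure E3} [IsFiniteMeasure μ] (hμ : μ unitSphereᶜ = 0) :
    Integrable (Function.uncurry fun (v : sphere (0 : E3) 1) (r : E3) ↦ f ⟪r, v⟫) (ν.prod μ) := by
  obtain ⟨M, hM⟩ := hf.exists_abs_le_on_Icc
  refine Integrable.of_bound (by fun_prop) M ?_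
  filter_upwards [Measure.quasiMeasurePreserving_snd.ae (ae_norm_eq_one hμ)] with p hp
  refine hM _ (abs_le.1 ?_)
  simpa [hp] using abs_real_inner_le_norm p.2 (p.1 : E3)

theorem integral_toSphere_integral_comp_inner {f : ℝ → ℝ} (hf : Continuous f)
    {μ : Measure E3} [IsFiniteMeasure μ] (hμ : μ unitSphereᶜ = 0) :
    ∫ v : sphere (0 : E3) 1, (∫ r, f ⟪r, v⟫ ∂μ) ∂(volume : Measure E3).toSphere
      = μ.real univ * (2 * π * ∫ t in (-1 : ℝ)..1, f t) := by
  rw [integral_integral_swap (integrable_prod_comp_inner hf _ hμ),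
    integral_congr_ae ((ae_norm_eq_one hμ).mono fun r hr ↦ integral_toSphere_comp_inner f hf hr),
    integral_const, smul_eq_mul]

theorem integral_comp_inner_of_invariant {σ : Measure E3} [IsProbabilityMeasure σ]
    (hσ : σ unitSphereᶜ = 0) (hinv : ∀ O : E3 ≃ₗᵢ[ℝ] E3, σ.map O = σ) {f : ℝ → ℝ}
    (hf : Continuous f) {v : E3} (hv : ‖v‖ = 1) :
    ∫ r, f ⟪r, v⟫ ∂σ = (∫ t in (-1 : ℝ)..1, f t) / 2 := by
  have h := integral_toSphere_integral_comp_inner hf hσ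
  rw [integral_congr_ae (ae_of_all _ fun w : sphere (0 : E3) 1 ↦
      integral_comp_inner_eq_of_map_eq σ hinv f ((norm_eq_of_mem_sphere w).trans hv.symm)),
    integral_const, smul_eq_mul, measureReal_toSphere_univ, probReal_univ] at h
  nlinarith [pi_pos]

theorem intervalIntegral_div_two_le_iSup {μ : Measure E3} [IsProbabilityMeasure μ]
    (hμ : μ unitSphereᶜ = 0) {f : ℝ → ℝ} (hf : Continuous f) :
    (∫ t in (-1 : ℝ)..1, f t) / 2 ≤ ⨆ v : unitSphere, ∫ r, f ⟪r, v⟫ ∂μ := by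
  obtain ⟨M, hM⟩ := hf.exists_abs_le_on_Icc
  have hbdd : BddAbove (range fun v : unitSphere ↦ ∫ r, f ⟪r, v⟫ ∂μ) := by
    refine ⟨M, forall_mem_range.2 fun v ↦ ?_⟩
    refine (le_abs_self _).trans ?_
    simpa using norm_integral_le_of_norm_le_const (f := fun r ↦ f ⟪r, (v : E3)⟫)
      ((ae_norm_eq_one hμ).mono fun r hr ↦
      hM _ (abs_le.1 (by
        simpa [hr, norm_eq_of_mem_sphere v] using abs_real_inner_le_norm r (v : E3))))
  have hmean := integral_toSphere_integral_comp_inner hf hμ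
  have hle : ∫ v : sphere (0 : E3) 1, (∫ r, f ⟪r, v⟫ ∂μ) ∂(volume : Measure E3).toSphere
      ≤ ∫ _ : sphere (0 : E3) 1, (⨆ v : unitSphere, ∫ r, f ⟪r, v⟫ ∂μ)
          ∂(volume : Measure E3).toSphere :=
    integral_mono (integrable_prod_comp_inner hf _ hμ).integral_prod_left (integrable_const _)
      fun v ↦ le_ciSup hbdd (⟨v, v.2⟩ : unitSphere)
  rw [integral_const, smul_eq_mul, measureReal_toSphere_univ, hmean, probReal_univ] at hle
  nlinarith [pi_pos]

theorem integral_neg_self_of_even {f : ℝ → ℝ} (heven : ∀ x, f (-x) = f x) (hf : Continuous f)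
    (a : ℝ) : ∫ x in -a..a, f x = 2 * ∫ x in 0..a, f x := by
  have hneg : ∫ x in -a..0, f x = ∫ x in 0..a, f x := by
    simpa [heven] using (intervalIntegral.integral_comp_neg (a := 0) (b := a) f).symm
  rw [← intervalIntegral.integral_add_adjacent_intervals (b := 0) (hf.intervalIntegrable _ _)
    (hf.intervalIntegrable _ _), hneg, two_mul]

theorem hasDerivAt_antideriv_sqrt_sq_add_sq {c d : ℝ} (hc : 0 < c) (hd : 0 < d) (x : ℝ) :
    HasDerivAt (fun x ↦ (x * √(c ^ 2 + d ^ 2 * x ^ 2) + c ^ 2 / d * arsinh (d * x / c)) / 2)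
      √(c ^ 2 + d ^ 2 * x ^ 2) x := by
  have hq : 0 < c ^ 2 + d ^ 2 * x ^ 2 := by positivity
  have hs : 0 < √(c ^ 2 + d ^ 2 * x ^ 2) := sqrt_pos.2 hq
  have hs2 : √(c ^ 2 + d ^ 2 * x ^ 2) ^ 2 = c ^ 2 + d ^ 2 * x ^ 2 := sq_sqrt hq.le
  have hsqrt : HasDerivAt (fun x ↦ √(c ^ 2 + d ^ 2 * x ^ 2))
      (d ^ 2 * x / √(c ^ 2 + d ^ 2 * x ^ 2)) x := by
    refine (((hasDerivAt_pow 2 x).const_mul (d ^ 2)).const_add (c ^ 2)).sqrt hq.ne'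
      |>.congr_deriv ?_
    field_simp
    ring
  have harsinh : HasDerivAt (fun x ↦ arsinh (d * x / c)) (d / √(c ^ 2 + d ^ 2 * x ^ 2)) x := by
    refine (((hasDerivAt_id' x).const_mul d).div_const c).arsinh.congr_deriv ?_
    have h1 : √(1 + (d * x / c) ^ 2) = √(c ^ 2 + d ^ 2 * x ^ 2) / c := by
      rw [← sqrt_sq (div_pos hs hc).le]
      congr 1
      rw [div_pow, div_pow, hs2]
      field_simp
    rw [h1, smul_eq_mul]
    field_simp
  refine (((hasDerivAt_id' x).mul hsqrt).add (harsinh.const_mul (c ^ 2 / d))).div_const 2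
    |>.congr_deriv ?_
  field_simp
  linear_combination -hs2

theorem integral_sqrt_sq_add_sq {c d : ℝ} (hc : 0 < c) (hd : 0 < d) :
    ∫ x in (0 : ℝ)..1, √(c ^ 2 + d ^ 2 * x ^ 2)
      = (√(c ^ 2 + d ^ 2) + c ^ 2 / d * arsinh (d / c)) / 2 := by
  rw [intervalIntegral.integral_eq_sub_of_hasDerivAt
    (fun x _ ↦ hasDerivAt_antideriv_sqrt_sq_add_sq hc hd x)
    ((by fun_prop : Continuous _).intervalIntegrable _ _)]
  simp

theorem integral_sqrt_div_two (C : ℝ) :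
    (∫ x in (-1 : ℝ)..1, √(C ^ 2 + (1 - C ^ 2) * x ^ 2)) / 2
      = ∫ x in (0 : ℝ)..1, √(C ^ 2 + (1 - C ^ 2) * x ^ 2) := by
  rw [integral_neg_self_of_even (fun x ↦ by rw [neg_sq]) (by fun_prop)]
  ring

theorem g_eq_of_invariant {σ : Measure E3} [IsProbabilityMeasure σ] (hσ : σ unitSphereᶜ = 0)
    (hinv : ∀ O : E3 ≃ₗᵢ[ℝ] E3, σ.map O = σ) (C : ℝ) :
    g C σ = ∫ x in (0 : ℝ)..1, √(C ^ 2 + (1 - C ^ 2) * x ^ 2) := by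
  have : Nonempty unitSphere := ⟨⟨EuclideanSpace.single 0 1, by simp [unitSphere]⟩⟩
  calc g C σ = ⨆ _ : unitSphere, (∫ x in (-1 : ℝ)..1, √(C ^ 2 + (1 - C ^ 2) * x ^ 2)) / 2 :=
        iSup_congr fun v ↦ integral_comp_inner_of_invariant hσ hinv
          (f := fun x ↦ √(C ^ 2 + (1 - C ^ 2) * x ^ 2)) (by fun_prop) (norm_eq_of_mem_sphere v)
    _ = _ := by rw [ciSup_const, integral_sqrt_div_two]

theorem integral_sqrt_le_g {μ : Measure E3} [IsProbabilityMeasure μ] (hμ : μ unitSphereᶜ = 0)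
    (C : ℝ) : ∫ x in (0 : ℝ)..1, √(C ^ 2 + (1 - C ^ 2) * x ^ 2) ≤ g C μ := by
  rw [← integral_sqrt_div_two]
  exact intervalIntegral_div_two_le_iSup hμ (f := fun x ↦ √(C ^ 2 + (1 - C ^ 2) * x ^ 2))
    (by fun_prop)

theorem g_isotropic (σ : Measure E3) [IsProbabilityMeasure σ] (hσ : σ unitSphereᶜ = 0)
    (hinv : ∀ O : E3 ≃ₗᵢ[ℝ] E3, Measure.map ⇑O σ = σ) :
    (∀ C ∈ Set.Icc (0 : ℝ) 1,
      g C σ = ∫ x in (0 : ℝ)..1, Real.sqrt (C ^ 2 + (1 - C ^ 2) * x ^ 2)) ∧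
    (∀ C : ℝ, 0 < C → C < 1 →
      g C σ = 1 / 2 + C ^ 2 * Real.arsinh (Real.sqrt (1 - C ^ 2) / C)
          / (2 * Real.sqrt (1 - C ^ 2))) ∧
    g 0 σ = 1 / 2 ∧
    (∀ μ : Measure E3, IsProbabilityMeasure μ → μ unitSphereᶜ = 0 →
      ∀ C ∈ Set.Icc (0 : ℝ) 1, g C σ ≤ g C μ) := by
  refine ⟨fun C _ ↦ g_eq_of_invariant hσ hinv C, fun C hC0 hC1 ↦ ?_, ?_,
    fun μ _ hμ C _ ↦ (g_eq_of_invariant hσ hinv C).trans_le (integral_sqrt_le_g hμ C)⟩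
  · have hd : 0 < √(1 - C ^ 2) := sqrt_pos.2 (by nlinarith)
    have hd2 : √(1 - C ^ 2) ^ 2 = 1 - C ^ 2 := sq_sqrt (by nlinarith)
    rw [g_eq_of_invariant hσ hinv, ← hd2, integral_sqrt_sq_add_sq hC0 hd, hd2, add_sub_cancel,
      sqrt_one]
    ring
  · rw [g_eq_of_invariant hσ hinv, intervalIntegral.integral_congr (g := fun x ↦ x)
      fun x hx ↦ ?_, integral_id]
    · norm_num
    · rw [uIcc_of_le zero_le_one] at hx
      simp [sqrt_sq hx.1]
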